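/- Let R be a fusion ring with basis {x_A} indexed by a finite set, fusion coefficients N_{A,B}^C ∈ ℕ, and dimension function d assigning to each basis element a positive real with d_A d_B = Σ_C N_{A,B}^C d_C. If operators O_A on a finite-dimensional complex vector space satisfy O_A O_B = Σ_C N_{A,B}^C O_C, then P := (1/D) Σ_A d_A O_A, where D := Σ_A d_A^2, satisfies P^2 = P, provided the fusion ring has a conjugation A ↦ Ā with d_Ā = d_A and Frobenius reciprocity N_{A,B}^C = N_{Ā,C}^B. -/

import Mathlib

/-!
Expanding `P * P` with the fusion rules, the coefficient of `O_C` is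
`D⁻² Σ_{A,B} d_A d_B N_{AB}^C`. Frobenius reciprocity gives
`Σ_B N_{AB}^C d_B = Σ_B N_{ĀC}^B d_B = d_Ā d_C = d_A d_C`,
so that coefficient is `D⁻² · D d_C = d_C / D`.
-/

open Finset

section FusionRing

variable {ι : Type*} [Fintype ι] (N : ι → ι → ι → ℕ)

theorem sum_fusion_mul_dim {R : Type*} [CommSemiring R] {d : ι → R} {bar : ι → ι}
    (hdim : ∀ A B, d A * d B = ∑ C, (N A B C : R) * d C)
    (hdbar : ∀ A, d (bar A) = d A) (hfrob : ∀ A B C, N A B C = N (bar A) C B) (A C : ι) :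
    ∑ B, (N A B C : R) * d B = d A * d C := by
  simp_rw [hfrob A _ C]
  rw [← hdim, hdbar]

theorem sum_sum_dim_mul_dim_mul_fusion {R : Type*} [CommSemiring R] {d : ι → R}
    {bar : ι → ι} (hdim : ∀ A B, d A * d B = ∑ C, (N A B C : R) * d C)
    (hdbar : ∀ A, d (bar A) = d A) (hfrob : ∀ A B C, N A B C = N (bar A) C B) (C : ι) :
    ∑ A, ∑ B, d A * d B * N A B C = (∑ A, d A ^ 2) * d C := by
  calc ∑ A, ∑ B, d A * d B * N A B C
      = ∑ A, d A * ∑ B, (N A B C : R) * d B := by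
        simp_rw [mul_sum]
        exact sum_congr rfl fun A _ => sum_congr rfl fun B _ => by ring
    _ = (∑ A, d A ^ 2) * d C := by
        simp_rw [sum_fusion_mul_dim N hdim hdbar hfrob, sum_mul]
        exact sum_congr rfl fun A _ => by ring

theorem sum_smul_mul_sum_smul_of_fusion {k R : Type*} [CommSemiring k] [Semiring R]
    [Algebra k R] {O : ι → R} (hO : ∀ A B, O A * O B = ∑ C, (N A B C : k) • O C) (c : ι → k) :
    (∑ A, c A • O A) * (∑ B, c B • O B) = ∑ C, (∑ A, ∑ B, c A * c B * N A B C) • O C := by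
  simp_rw [sum_mul_sum, smul_mul_smul_comm, hO, smul_sum, smul_smul, sum_smul]
  exact (sum_congr rfl fun A _ => sum_comm).trans sum_comm

/-- For `D = 0` the statement holds through `x / 0 = 0`, which makes `P = 0`. -/
theorem sum_dim_div_smul_mul_self {k R : Type*} [Field k] [Semiring R] [Algebra k R]
    {d : ι → k} {bar : ι → ι}
    (hdim : ∀ A B, d A * d B = ∑ C, (N A B C : k) * d C)
    (hdbar : ∀ A, d (bar A) = d A) (hfrob : ∀ A B C, N A B C = N (bar A) C B)
    {O : ι → R} (hO : ∀ A B, O A * O B = ∑ C, (N A B C : k) • O C) :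
    let P := ∑ A, (d A / ∑ B, d B ^ 2) • O A
    P * P = P := by
  set D := ∑ B, d B ^ 2 with hD
  intro P
  rw [sum_smul_mul_sum_smul_of_fusion N hO]
  refine sum_congr rfl fun C _ => congrArg (· • O C) ?_
  have hnum := sum_sum_dim_mul_dim_mul_fusion N hdim hdbar hfrob C
  rw [← hD] at hnum
  calc ∑ A, ∑ B, d A / D * (d B / D) * N A B C
      = (∑ A, ∑ B, d A * d B * N A B C) / (D * D) := by
        simp_rw [sum_div]
        exact sum_congr rfl fun A _ => sum_congr rfl fun B _ => by ring
    _ = d C / D := by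
        rw [hnum]
        rcases eq_or_ne D 0 with hD0 | hD0
        · simp [hD0]
        · field_simp

end FusionRing

theorem fusion_ring_projector_general
    {V : Type*} [AddCommGroup V] [Module ℂ V]
    {ι : Type*} [Fintype ι]
    (N : ι → ι → ι → ℕ) (d : ι → ℝ) (bar : ι → ι)
    (hdim : ∀ A B, d A * d B = ∑ C, (N A B C : ℝ) * d C)
    (hdbar : ∀ A, d (bar A) = d A)
    (hfrob : ∀ A B C, N A B C = N (bar A) C B)
    (O : ι → Module.End ℂ V)
    (hO : ∀ A B, O A * O B = ∑ C, (N A B C : ℂ) • O C)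
    (D : ℝ) (hD : D = ∑ A, d A ^ 2)
    (P : Module.End ℂ V) (hP : P = ∑ A, ((d A / D : ℝ) : ℂ) • O A) :
    P * P = P := by
  have hdimC : ∀ A B, (d A : ℂ) * d B = ∑ C, (N A B C : ℂ) * d C :=
    fun A B => by exact_mod_cast hdim A B
  have hdbarC : ∀ A, (d (bar A) : ℂ) = d A := fun A => by rw [hdbar]
  have hPC : P = ∑ A, ((d A : ℂ) / ∑ B, (d B : ℂ) ^ 2) • O A := by
    rw [hP, hD]
    push_cast
    rfl
  rw [hPC]
  exact sum_dim_div_smul_mul_self N hdimC hdbarC hfrob hO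

/-- In a fusion ring with conjugation and Frobenius reciprocity,
operators representing the fusion algebra yield an idempotent
`P = (1/D) Σ_A d_A O_A`. -/
theorem fusion_ring_projector
    {V : Type*} [AddCommGroup V] [Module ℂ V] [FiniteDimensional ℂ V]
    {ι : Type*} [Fintype ι]
    (N : ι → ι → ι → ℕ) (d : ι → ℝ) (bar : ι → ι)
    (hdpos : ∀ A, 0 < d A)
    (hdim : ∀ A B, d A * d B = ∑ C, (N A B C : ℝ) * d C)
    (hdbar : ∀ A, d (bar A) = d A)
    (hfrob : ∀ A B C, N A B C = N (bar A) C B)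
    (O : ι → Module.End ℂ V)
    (hO : ∀ A B, O A * O B = ∑ C, (N A B C : ℂ) • O C)
    (D : ℝ) (hD : D = ∑ A, d A ^ 2)
    (P : Module.End ℂ V) (hP : P = ∑ A, ((d A / D : ℝ) : ℂ) • O A) :
    P * P = P :=
  fusion_ring_projector_general N d bar hdim hdbar hfrob O hO D hD P hP
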